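/- Fix integers n ≥ 1, d ≥ 1, reals 0 < μ ≤ L, a stepsize 0 < α < 2/L and a probability p ∈ (0,1]. For i = 1,…,n let f_i : ℝ^d → ℝ be differentiable, μ-strongly convex and L-smooth, and let r : ℝ^d → ℝ be convex and continuous. Let S be an n×n real symmetric positive semidefinite matrix with I − S² positive semidefinite. Suppose n×d real matrices (x★, z★, u★) satisfy, writing a_i for the i-th row: (z★)_i = (x★)_i − α·∇f_i((x★)_i) − α·(S·u★)_i for every i; S·z★ = 0; and (x★)_i = prox_{αr}((z★)_i) for every i. Let x, u be n×d real matrices with ‖S·(u − u★)‖_F² ≥ (1/5)·‖u − u★‖_F², define z with rows z_i = x_i − α·∇f_i(x_i) − α·(S·u)_i, and for θ ∈ {0,1} set u⁺(θ) = u + θ·(p/α)·S·z and x⁺(θ) the matrix with rows prox_{αr}( ((I − θ·S²)·z)_i ). Then with ζ = max{ (1−αμ)², (1−αL)², 1 − p²/5 }, one has p·[ ‖x⁺(1) − x★‖_F² + (α²/p²)·‖u⁺(1) − u★‖_F² ] + (1−p)·[ ‖x⁺(0) − x★‖_F² + (α²/p²)·‖u⁺(0) − u★‖_F² ] ≤ ζ·[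 ‖x − x★‖_F² + (α²/p²)·‖u − u★‖_F² ]. -/

import Mathlib

noncomputable section

/-- An `n × d` real matrix, viewed as `n` rows in Euclidean space `ℝ^d`. -/
abbrev Mat (n d : ℕ) := Fin n → EuclideanSpace ℝ (Fin d)

/-- Multiplication of an `n × n` matrix with an `n × d` matrix. -/
def matMul {n d : ℕ} (S : Matrix (Fin n) (Fin n) ℝ) (x : Mat n d) : Mat n d :=
  fun i => ∑ j, S i j • x j

/-- Squared Frobenius norm of an `n × d` matrix. -/
def fro2 {n d : ℕ} (x : Mat n d) : ℝ := ∑ i, ‖x i‖ ^ 2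

set_option linter.unusedSectionVars false
set_option linter.unusedVariables false
set_option maxHeartbeats 1000000

namespace MGSkipAux

open Set Filter Topology

local notation "⟪" x ", " y "⟫" => @inner ℝ _ _ x y

section Vec

variable {E : Type*} [NormedAddCommGroup E] [InnerProductSpace ℝ E] [CompleteSpace E]

/-- Derivative along a line of a function with a gradient. -/
lemma hasDerivAt_line (φ : E → ℝ) (G a v : E) (t : ℝ)
    (h : HasGradientAt φ G (a + t • v)) :
    HasDerivAt (fun s : ℝ => φ (a + s • v)) ⟪G, v⟫ t := by
  have hline : HasDerivAt (fun s : ℝ => a + s • v) v t := by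
    simpa using ((hasDerivAt_id t).smul_const v).const_add a
  have := h.hasFDerivAt.comp_hasDerivAt t hline
  simp at this
  exact this

/-- First-order lower bound for a convex function, given the directional derivative. -/
lemma convex_lower (φ : E → ℝ) (hconv : ConvexOn ℝ Set.univ φ) {a b : E} {c : ℝ}
    (hder : HasDerivAt (fun s : ℝ => φ (a + s • (b - a))) c 0) :
    φ a + c ≤ φ b := by
  set q : ℝ → ℝ := fun s => φ (a + s • (b - a)) with hq
  have hq0 : q 0 = φ a := by simp [hq]
  have hq1 : q 1 = φ b := by simp [hq]
  have hslope : ∀ t ∈ Set.Ioc (0:ℝ) 1, (q t - q 0) / t ≤ q 1 - q 0 := by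
    intro t ht
    have hco : q t ≤ (1 - t) * φ a + t * φ b := by
      have h1 : a + t • (b - a) = (1 - t) • a + t • b := by module
      have := hconv.2 (Set.mem_univ a) (Set.mem_univ b)
        (by linarith [ht.2] : (0:ℝ) ≤ 1 - t) ht.1.le (by ring)
      simpa [hq, h1] using this
    rw [div_le_iff₀ ht.1]
    rw [hq0, hq1]
    nlinarith [ht.1]
  have htend : Tendsto (fun t => (q t - q 0) / t) (𝓝[>] (0:ℝ)) (𝓝 c) := by
    have := hasDerivAt_iff_tendsto_slope.mp hder
    have h2 : Tendsto (slope q 0) (𝓝[>] (0:ℝ)) (𝓝 c) :=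
      this.mono_left (nhdsWithin_mono 0 (fun t ht => ne_of_gt ht))
    refine h2.congr (fun t => ?_)
    simp [slope_def_field, div_eq_inv_mul]
  have hle : c ≤ q 1 - q 0 := by
    refine le_of_tendsto htend ?_
    filter_upwards [Ioc_mem_nhdsGT_of_mem (Set.mem_Ico.mpr ⟨le_refl _, zero_lt_one⟩)] with t ht
    exact hslope t ht
  rw [hq0, hq1] at hle
  linarith

/-- Descent lemma for a function with Lipschitz gradient. -/
lemma descent_lemma (φ : E → ℝ) (G : E → E) (C : ℝ) (hC : 0 ≤ C)
    (hgrad : ∀ x, HasGradientAt φ (G x) x)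
    (hlip : LipschitzWith C.toNNReal G) (a b : E) :
    φ b ≤ φ a + ⟪G a, b - a⟫ + C / 2 * ‖b - a‖ ^ 2 := by
  set v := b - a with hv
  set ψ : ℝ → ℝ := fun t => φ (a + t • v) - t * ⟪G a, v⟫ - t ^ 2 * (C / 2 * ‖v‖ ^ 2)
    with hψ
  have hD : ∀ t : ℝ, HasDerivAt ψ
      (⟪G (a + t • v), v⟫ - ⟪G a, v⟫ - 2 * t * (C / 2 * ‖v‖ ^ 2)) t := by
    intro t
    have h1 := hasDerivAt_line φ (G (a + t • v)) a v t (hgrad _)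
    have h2 : HasDerivAt (fun s : ℝ => s * ⟪G a, v⟫) ⟪G a, v⟫ t :=
      hasDerivAt_mul_const _
    have h3 : HasDerivAt (fun s : ℝ => s ^ 2 * (C / 2 * ‖v‖ ^ 2))
        (2 * t * (C / 2 * ‖v‖ ^ 2)) t := by
      have := (hasDerivAt_pow 2 t).mul_const (C / 2 * ‖v‖ ^ 2)
      refine this.congr_deriv ?_
      ring
    exact (h1.sub h2).sub h3
  have hdiff : Differentiable ℝ ψ := fun t => (hD t).differentiableAt
  have hanti : AntitoneOn ψ (Set.Icc (0:ℝ) 1) := by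
    refine antitoneOn_of_deriv_nonpos (convex_Icc 0 1) hdiff.continuous.continuousOn
      (hdiff.differentiableOn) ?_
    intro t ht
    rw [interior_Icc] at ht
    rw [(hD t).deriv]
    have hip : ⟪G (a + t • v), v⟫ - ⟪G a, v⟫ = ⟪G (a + t • v) - G a, v⟫ := by
      rw [inner_sub_left]
    have hub : ⟪G (a + t • v) - G a, v⟫ ≤ C * t * ‖v‖ ^ 2 := by
      calc ⟪G (a + t • v) - G a, v⟫ ≤ ‖G (a + t • v) - G a‖ * ‖v‖ :=
            real_inner_le_norm _ _
        _ ≤ (C * (t * ‖v‖)) * ‖v‖ := by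
            have := hlip.dist_le_mul (a + t • v) a
            rw [dist_eq_norm, dist_eq_norm] at this
            have h4 : a + t • v - a = t • v := by abel
            rw [h4] at this
            have h5 : ‖t • v‖ = t * ‖v‖ := by
              rw [norm_smul, Real.norm_eq_abs, abs_of_pos ht.1]
            rw [h5] at this
            have hCc : (C.toNNReal : ℝ) = C := Real.coe_toNNReal _ hC
            rw [hCc] at this
            exact mul_le_mul_of_nonneg_right this (norm_nonneg v)
        _ = C * t * ‖v‖ ^ 2 := by ring
    rw [hip]
    nlinarith [hub]
  have h01 : ψ 1 ≤ ψ 0 :=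
    hanti (Set.mem_Icc.mpr ⟨le_refl _, zero_le_one⟩)
      (Set.mem_Icc.mpr ⟨zero_le_one, le_refl _⟩) zero_le_one
  have hψ0 : ψ 0 = φ a := by simp [hψ]
  have hψ1 : ψ 1 = φ b - ⟪G a, v⟫ - C / 2 * ‖v‖ ^ 2 := by
    simp [hψ, hv]
  rw [hψ0, hψ1] at h01
  linarith

/-- Contraction of the gradient step for a strongly convex smooth function. -/
lemma grad_contract (μ L α : ℝ) (hμ : 0 < μ) (hμL : μ ≤ L) (hα0 : 0 < α)
    (hαL2 : α * L < 2)
    (φ : E → ℝ) (G : E → E)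
    (hgrad : ∀ x, HasGradientAt φ (G x) x)
    (hstrong : ConvexOn ℝ Set.univ (fun x => φ x - μ / 2 * ‖x‖ ^ 2))
    (hlip : LipschitzWith L.toNNReal G) (a b : E) :
    ‖(a - α • G a) - (b - α • G b)‖ ^ 2
      ≤ max ((1 - α * μ) ^ 2) ((1 - α * L) ^ 2) * ‖a - b‖ ^ 2 := by
  have hL0 : 0 < L := lt_of_lt_of_le hμ hμL
  -- first-order strong convexity lower bound
  have flower : ∀ x y : E, φ x + ⟪G x, y - x⟫ + μ / 2 * ‖y - x‖ ^ 2 ≤ φ y := by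
    intro x y
    set v := y - x with hv
    have hφd : HasDerivAt (fun s : ℝ => φ (x + s • v)) ⟪G x, v⟫ 0 := by
      apply hasDerivAt_line
      simpa using hgrad x
    have hnorm : ∀ s : ℝ, ‖x + s • v‖ ^ 2 = ‖x‖ ^ 2 + 2 * s * ⟪x, v⟫ + s ^ 2 * ‖v‖ ^ 2 := by
      intro s
      rw [norm_add_sq_real, real_inner_smul_right, norm_smul, Real.norm_eq_abs,
        mul_pow, sq_abs]
      ring
    have hqd : HasDerivAt (fun s : ℝ => μ / 2 * ‖x + s • v‖ ^ 2) (μ * ⟪x, v⟫) 0 := by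
      have e2 : (fun s : ℝ => μ / 2 * ‖x + s • v‖ ^ 2)
          = fun s : ℝ => μ / 2 * ‖x‖ ^ 2 + s * (μ * ⟪x, v⟫) + s ^ 2 * (μ / 2 * ‖v‖ ^ 2) := by
        funext s; rw [hnorm]; ring
      rw [e2]
      have hb : HasDerivAt (fun s : ℝ => s ^ 2 * (μ / 2 * ‖v‖ ^ 2)) 0 0 := by
        have h := (hasDerivAt_pow 2 (0:ℝ)).mul_const (μ / 2 * ‖v‖ ^ 2)
        simpa using h
      have ha : HasDerivAt (fun s : ℝ => μ / 2 * ‖x‖ ^ 2 + s * (μ * ⟪x, v⟫)) (μ * ⟪x, v⟫) 0 :=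
        (hasDerivAt_mul_const _).const_add _
      have := ha.add hb
      simp at this
      exact this
    have hd := hφd.sub hqd
    have hcl := convex_lower _ hstrong (a := x) (b := y) (c := ⟪G x, v⟫ - μ * ⟪x, v⟫) hd
    have hxv : ⟪x, v⟫ = ⟪x, y⟫ - ‖x‖ ^ 2 := by
      rw [hv, inner_sub_right, real_inner_self_eq_norm_sq]
    have hyx : ‖y - x‖ ^ 2 = ‖y‖ ^ 2 - 2 * ⟪x, y⟫ + ‖x‖ ^ 2 := by
      rw [norm_sub_sq_real, real_inner_comm]
    rw [hyx]
    rw [hxv] at hcl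
    linarith
  have hdesc : ∀ x y : E, φ y ≤ φ x + ⟪G x, y - x⟫ + L / 2 * ‖y - x‖ ^ 2 :=
    descent_lemma φ G L hL0.le hgrad hlip
  -- gradient of h = φ - μ/2‖·‖²
  set Gh : E → E := fun x => G x - μ • x with hGh
  have hflowerh : ∀ x y : E,
      ⟪Gh x, y - x⟫ ≤ (φ y - μ / 2 * ‖y‖ ^ 2) - (φ x - μ / 2 * ‖x‖ ^ 2) := by
    intro x y
    have h1 := flower x y
    have h2 : ⟪Gh x, y - x⟫ = ⟪G x, y - x⟫ - μ * ⟪x, y - x⟫ := by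
      rw [hGh]
      simp [inner_sub_left, real_inner_smul_left]
    have hxv : ⟪x, y - x⟫ = ⟪x, y⟫ - ‖x‖ ^ 2 := by
      rw [inner_sub_right, real_inner_self_eq_norm_sq]
    have hyx : ‖y - x‖ ^ 2 = ‖y‖ ^ 2 - 2 * ⟪x, y⟫ + ‖x‖ ^ 2 := by
      rw [norm_sub_sq_real, real_inner_comm]
    rw [h2, hxv]
    rw [hyx] at h1
    linarith
  have hdesch : ∀ x y : E,
      (φ y - μ / 2 * ‖y‖ ^ 2) - (φ x - μ / 2 * ‖x‖ ^ 2)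
        ≤ ⟪Gh x, y - x⟫ + (L - μ) / 2 * ‖y - x‖ ^ 2 := by
    intro x y
    have h1 := hdesc x y
    have h2 : ⟪Gh x, y - x⟫ = ⟪G x, y - x⟫ - μ * ⟪x, y - x⟫ := by
      rw [hGh]
      simp [inner_sub_left, real_inner_smul_left]
    have hxv : ⟪x, y - x⟫ = ⟪x, y⟫ - ‖x‖ ^ 2 := by
      rw [inner_sub_right, real_inner_self_eq_norm_sq]
    have hyx : ‖y - x‖ ^ 2 = ‖y‖ ^ 2 - 2 * ⟪x, y⟫ + ‖x‖ ^ 2 := by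
      rw [norm_sub_sq_real, real_inner_comm]
    rw [h2, hxv, hyx]
    rw [hyx] at h1
    linarith
  -- Bregman bound
  have hB : ∀ x y : E, ∀ t : ℝ, 0 ≤ t →
      (t - (L - μ) * t ^ 2 / 2) * ‖Gh y - Gh x‖ ^ 2
        ≤ (φ y - μ / 2 * ‖y‖ ^ 2) - (φ x - μ / 2 * ‖x‖ ^ 2) - ⟪Gh x, y - x⟫ := by
    intro x y t ht
    set D := Gh y - Gh x with hD
    have h1 := hflowerh x (y - t • D)
    have h2 := hdesch y (y - t • D)
    have e1 : ⟪Gh x, y - t • D - x⟫ = ⟪Gh x, y - x⟫ - t * ⟪Gh x, D⟫ := by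
      rw [show y - t • D - x = (y - x) - t • D by abel, inner_sub_right,
        real_inner_smul_right]
    have e2 : ⟪Gh y, y - t • D - y⟫ = -(t * ⟪Gh y, D⟫) := by
      rw [show y - t • D - y = -(t • D) by abel, inner_neg_right, real_inner_smul_right]
    have e3 : ‖y - t • D - y‖ ^ 2 = t ^ 2 * ‖D‖ ^ 2 := by
      rw [show y - t • D - y = -(t • D) by abel, norm_neg, norm_smul,
        Real.norm_eq_abs, mul_pow, sq_abs]
    have e4 : t * ⟪Gh y, D⟫ - t * ⟪Gh x, D⟫ = t * ‖D‖ ^ 2 := by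
      rw [← mul_sub, ← inner_sub_left, ← hD, real_inner_self_eq_norm_sq]
    rw [e1] at h1
    rw [e2, e3] at h2
    nlinarith [h1, h2, e4]
  have hBsum : ∀ t : ℝ, 0 ≤ t →
      (2 * t - (L - μ) * t ^ 2) * ‖Gh a - Gh b‖ ^ 2 ≤ ⟪Gh a - Gh b, a - b⟫ := by
    intro t ht
    have h1 := hB b a t ht
    have h2 := hB a b t ht
    have e1 : ‖Gh b - Gh a‖ = ‖Gh a - Gh b‖ := norm_sub_rev _ _
    have e2 : ⟪Gh a - Gh b, a - b⟫
        = -(⟪Gh b, a - b⟫) - ⟪Gh a, b - a⟫ := by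
      rw [inner_sub_left]
      rw [show b - a = -(a - b) by abel, inner_neg_right]
      ring
    rw [e1] at h2
    rw [e2]
    nlinarith [h1, h2]
  have hkey : ‖Gh a - Gh b‖ ^ 2 ≤ (L - μ) * ⟪Gh a - Gh b, a - b⟫ := by
    rcases eq_or_lt_of_le hμL with hEq | hLt
    · have hLμ : L - μ = 0 := by rw [← hEq]; ring
      have hmono : 0 ≤ ⟪Gh a - Gh b, a - b⟫ := by
        have := hBsum 0 le_rfl
        simpa using this
      have hD0 : ‖Gh a - Gh b‖ ^ 2 ≤ 0 := by
        by_contra hcon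
        push_neg at hcon
        set q := ‖Gh a - Gh b‖ ^ 2 with hq
        have ht0 : (0:ℝ) < (⟪Gh a - Gh b, a - b⟫ + 1) / (2 * q) := by positivity
        have := hBsum _ ht0.le
        rw [hLμ] at this
        have hexp : (2 * ((⟪Gh a - Gh b, a - b⟫ + 1) / (2 * q))
              - 0 * ((⟪Gh a - Gh b, a - b⟫ + 1) / (2 * q)) ^ 2) * q
            = ⟪Gh a - Gh b, a - b⟫ + 1 := by
          field_simp
          ring
        rw [hexp] at this
        linarith
      rw [hLμ]
      nlinarith [sq_nonneg ‖Gh a - Gh b‖, hD0]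
    · have hc : 0 < L - μ := by linarith
      have := hBsum (1 / (L - μ)) (by positivity)
      have hexp : 2 * (1 / (L - μ)) - (L - μ) * (1 / (L - μ)) ^ 2 = 1 / (L - μ) := by
        field_simp
        ring
      rw [hexp] at this
      rw [div_mul_eq_mul_div, div_le_iff₀ hc] at this
      linarith [this]
  -- expand hkey in terms of Gd and Δ
  have hGhdiff : Gh a - Gh b = (G a - G b) - μ • (a - b) := by
    rw [hGh]
    module
  have hkey2 : ‖G a - G b‖ ^ 2 - 2 * μ * ⟪G a - G b, a - b⟫ + μ ^ 2 * ‖a - b‖ ^ 2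
      ≤ (L - μ) * (⟪G a - G b, a - b⟫ - μ * ‖a - b‖ ^ 2) := by
    have e1 : ‖Gh a - Gh b‖ ^ 2
        = ‖G a - G b‖ ^ 2 - 2 * μ * ⟪G a - G b, a - b⟫ + μ ^ 2 * ‖a - b‖ ^ 2 := by
      rw [hGhdiff, norm_sub_sq_real, real_inner_smul_right, norm_smul,
        Real.norm_eq_abs, mul_pow, sq_abs]
      ring
    have e2 : ⟪Gh a - Gh b, a - b⟫ = ⟪G a - G b, a - b⟫ - μ * ‖a - b‖ ^ 2 := by
      rw [hGhdiff, inner_sub_left, real_inner_smul_left, real_inner_self_eq_norm_sq]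
    rw [e1, e2] at hkey
    exact hkey
  have hcomb : ‖G a - G b‖ ^ 2 + μ * L * ‖a - b‖ ^ 2
      ≤ (μ + L) * ⟪G a - G b, a - b⟫ := by nlinarith [hkey2]
  have hT : μ * ‖a - b‖ ^ 2 ≤ ⟪G a - G b, a - b⟫ := by
    have h0 := hBsum 0 le_rfl
    simp at h0
    have e2 : ⟪Gh a - Gh b, a - b⟫ = ⟪G a - G b, a - b⟫ - μ * ‖a - b‖ ^ 2 := by
      rw [hGhdiff, inner_sub_left, real_inner_smul_left, real_inner_self_eq_norm_sq]
    rw [e2] at h0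
    linarith
  have hg2L : ‖G a - G b‖ ^ 2 ≤ L ^ 2 * ‖a - b‖ ^ 2 := by
    have h1 := hlip.dist_le_mul a b
    rw [dist_eq_norm, dist_eq_norm] at h1
    have hCc : (L.toNNReal : ℝ) = L := Real.coe_toNNReal _ hL0.le
    rw [hCc] at h1
    nlinarith [norm_nonneg (G a - G b), norm_nonneg (a - b), h1]
  have hg2μ : μ ^ 2 * ‖a - b‖ ^ 2 ≤ ‖G a - G b‖ ^ 2 := by
    have hcs := real_inner_le_norm (G a - G b) (a - b)
    nlinarith [sq_nonneg (‖G a - G b‖ - μ * ‖a - b‖), hT, hcs,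
      norm_nonneg (G a - G b), norm_nonneg (a - b),
      mul_le_mul_of_nonneg_left (le_trans hT hcs) hμ.le]
  have hre : (a - α • G a) - (b - α • G b) = (a - b) - α • (G a - G b) := by
    module
  have hexp : ‖(a - b) - α • (G a - G b)‖ ^ 2
      = ‖a - b‖ ^ 2 - 2 * α * ⟪G a - G b, a - b⟫ + α ^ 2 * ‖G a - G b‖ ^ 2 := by
    rw [norm_sub_sq_real, real_inner_smul_right, norm_smul, Real.norm_eq_abs,
      mul_pow, sq_abs, real_inner_comm]
    ring
  rw [hre, hexp]
  have hμL0 : 0 < μ + L := by linarith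
  rcases le_or_gt (α * (μ + L)) 2 with hcase | hcase
  · have hA : 0 ≤ (μ + L) * ⟪G a - G b, a - b⟫ - (‖G a - G b‖ ^ 2 + μ * L * ‖a - b‖ ^ 2) := by
      linarith
    have hBn : 0 ≤ ‖G a - G b‖ ^ 2 - μ ^ 2 * ‖a - b‖ ^ 2 := by linarith
    have hid : ((1 - α * μ) ^ 2 * ‖a - b‖ ^ 2
          - (‖a - b‖ ^ 2 - 2 * α * ⟪G a - G b, a - b⟫ + α ^ 2 * ‖G a - G b‖ ^ 2)) * (μ + L)
        = 2 * α * ((μ + L) * ⟪G a - G b, a - b⟫ - (‖G a - G b‖ ^ 2 + μ * L * ‖a - b‖ ^ 2))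
          + (α * (2 - α * (μ + L))) * (‖G a - G b‖ ^ 2 - μ ^ 2 * ‖a - b‖ ^ 2) := by
      ring
    have h3 : 0 ≤ ((1 - α * μ) ^ 2 * ‖a - b‖ ^ 2
        - (‖a - b‖ ^ 2 - 2 * α * ⟪G a - G b, a - b⟫ + α ^ 2 * ‖G a - G b‖ ^ 2)) * (μ + L) := by
      rw [hid]
      have t1 : 0 ≤ 2 * α := by linarith
      have t2 : 0 ≤ α * (2 - α * (μ + L)) := mul_nonneg hα0.le (by linarith)
      exact add_nonneg (mul_nonneg t1 hA) (mul_nonneg t2 hBn)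
    have h4 : 0 ≤ (1 - α * μ) ^ 2 * ‖a - b‖ ^ 2
        - (‖a - b‖ ^ 2 - 2 * α * ⟪G a - G b, a - b⟫ + α ^ 2 * ‖G a - G b‖ ^ 2) := by
      by_contra hneg
      push_neg at hneg
      exact absurd h3 (not_le.mpr (mul_neg_of_neg_of_pos hneg hμL0))
    calc ‖a - b‖ ^ 2 - 2 * α * ⟪G a - G b, a - b⟫ + α ^ 2 * ‖G a - G b‖ ^ 2
        ≤ (1 - α * μ) ^ 2 * ‖a - b‖ ^ 2 := by linarith
      _ ≤ max ((1 - α * μ) ^ 2) ((1 - α * L) ^ 2) * ‖a - b‖ ^ 2 :=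
          mul_le_mul_of_nonneg_right (le_max_left _ _) (by positivity)
  · have hA : 0 ≤ (μ + L) * ⟪G a - G b, a - b⟫ - (‖G a - G b‖ ^ 2 + μ * L * ‖a - b‖ ^ 2) := by
      linarith
    have hBn : 0 ≤ L ^ 2 * ‖a - b‖ ^ 2 - ‖G a - G b‖ ^ 2 := by linarith
    have hid : ((1 - α * L) ^ 2 * ‖a - b‖ ^ 2
          - (‖a - b‖ ^ 2 - 2 * α * ⟪G a - G b, a - b⟫ + α ^ 2 * ‖G a - G b‖ ^ 2)) * (μ + L)
        = 2 * α * ((μ + L) * ⟪G a - G b, a - b⟫ - (‖G a - G b‖ ^ 2 + μ * L * ‖a - b‖ ^ 2))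
          + (α * (α * (μ + L) - 2)) * (L ^ 2 * ‖a - b‖ ^ 2 - ‖G a - G b‖ ^ 2) := by
      ring
    have h3 : 0 ≤ ((1 - α * L) ^ 2 * ‖a - b‖ ^ 2
        - (‖a - b‖ ^ 2 - 2 * α * ⟪G a - G b, a - b⟫ + α ^ 2 * ‖G a - G b‖ ^ 2)) * (μ + L) := by
      rw [hid]
      have t1 : 0 ≤ 2 * α := by linarith
      have t2 : 0 ≤ α * (α * (μ + L) - 2) := mul_nonneg hα0.le (by linarith)
      exact add_nonneg (mul_nonneg t1 hA) (mul_nonneg t2 hBn)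
    have h4 : 0 ≤ (1 - α * L) ^ 2 * ‖a - b‖ ^ 2
        - (‖a - b‖ ^ 2 - 2 * α * ⟪G a - G b, a - b⟫ + α ^ 2 * ‖G a - G b‖ ^ 2) := by
      by_contra hneg
      push_neg at hneg
      exact absurd h3 (not_le.mpr (mul_neg_of_neg_of_pos hneg hμL0))
    calc ‖a - b‖ ^ 2 - 2 * α * ⟪G a - G b, a - b⟫ + α ^ 2 * ‖G a - G b‖ ^ 2
        ≤ (1 - α * L) ^ 2 * ‖a - b‖ ^ 2 := by linarith
      _ ≤ max ((1 - α * μ) ^ 2) ((1 - α * L) ^ 2) * ‖a - b‖ ^ 2 :=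
          mul_le_mul_of_nonneg_right (le_max_right _ _) (by positivity)

/-- Subgradient inequality at the proximal point. -/
lemma prox_subgrad (α : ℝ) (hα0 : 0 < α) (r : E → ℝ) (hrconv : ConvexOn ℝ Set.univ r)
    (prox : E → E)
    (hprox : ∀ y w, α * r (prox y) + 1 / 2 * ‖prox y - y‖ ^ 2
        ≤ α * r w + 1 / 2 * ‖w - y‖ ^ 2)
    (y w : E) : ⟪y - prox y, w - prox y⟫ ≤ α * (r w - r (prox y)) := by
  set q := prox y with hqdef
  have hstep : ∀ t : ℝ, 0 < t → t ≤ 1 →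
      ⟪y - q, w - q⟫ ≤ α * (r w - r q) + t / 2 * ‖w - q‖ ^ 2 := by
    intro t ht0 ht1
    have hmin := hprox y (q + t • (w - q))
    have hrcvx : r (q + t • (w - q)) ≤ (1 - t) * r q + t * r w := by
      have h1 : q + t • (w - q) = (1 - t) • q + t • w := by module
      have := hrconv.2 (Set.mem_univ q) (Set.mem_univ w)
        (by linarith : (0:ℝ) ≤ 1 - t) ht0.le (by ring)
      rw [h1]
      exact this
    have hnorm : ‖q + t • (w - q) - y‖ ^ 2
        = ‖q - y‖ ^ 2 + 2 * t * ⟪q - y, w - q⟫ + t ^ 2 * ‖w - q‖ ^ 2 := by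
      rw [show q + t • (w - q) - y = (q - y) + t • (w - q) by abel, norm_add_sq_real,
        real_inner_smul_right, norm_smul, Real.norm_eq_abs, mul_pow, sq_abs]
      ring
    rw [hnorm] at hmin
    have hr2 : α * r (q + t • (w - q)) ≤ α * ((1 - t) * r q + t * r w) :=
      mul_le_mul_of_nonneg_left hrcvx hα0.le
    have hflip : ⟪y - q, w - q⟫ = -⟪q - y, w - q⟫ := by
      rw [show y - q = -(q - y) by abel, inner_neg_left]
    have key : t * ⟪y - q, w - q⟫ ≤ t * (α * (r w - r q) + t / 2 * ‖w - q‖ ^ 2) := by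
      rw [hflip]
      nlinarith [hmin, hr2]
    exact le_of_mul_le_mul_left key ht0
  refine le_of_forall_pos_le_add ?_
  intro ε hε
  set N := ‖w - q‖ ^ 2 with hN
  have hN0 : 0 ≤ N := by positivity
  set t := min 1 (ε / (N / 2 + 1)) with ht
  have ht0 : 0 < t := lt_min zero_lt_one (by positivity)
  have ht1 : t ≤ 1 := min_le_left _ _
  have h1 := hstep t ht0 ht1
  have h2 : t / 2 * N ≤ ε := by
    have h3 : t ≤ ε / (N / 2 + 1) := min_le_right _ _
    have h4 : t / 2 * N ≤ ε / (N / 2 + 1) / 2 * N :=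
      mul_le_mul_of_nonneg_right (by linarith) hN0
    have h5 : ε / (N / 2 + 1) / 2 * N ≤ ε := by
      rw [div_div, div_mul_eq_mul_div, div_le_iff₀ (by positivity)]
      nlinarith [hN0, hε.le]
    linarith
  linarith

/-- The proximal operator is nonexpansive (squared form). -/
lemma prox_nonexp (α : ℝ) (hα0 : 0 < α) (r : E → ℝ) (hrconv : ConvexOn ℝ Set.univ r)
    (prox : E → E)
    (hprox : ∀ y w, α * r (prox y) + 1 / 2 * ‖prox y - y‖ ^ 2
        ≤ α * r w + 1 / 2 * ‖w - y‖ ^ 2)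
    (y1 y2 : E) : ‖prox y1 - prox y2‖ ^ 2 ≤ ‖y1 - y2‖ ^ 2 := by
  set p1 := prox y1
  set p2 := prox y2
  have h1 := prox_subgrad α hα0 r hrconv prox hprox y1 p2
  have h2 := prox_subgrad α hα0 r hrconv prox hprox y2 p1
  have hfirm : ‖p1 - p2‖ ^ 2 ≤ ⟪y1 - y2, p1 - p2⟫ := by
    have h1' : ⟪y1 - p1, p2 - p1⟫ = -⟪y1 - p1, p1 - p2⟫ := by
      rw [show p2 - p1 = -(p1 - p2) by abel, inner_neg_right]
    have h3 : ⟪(y2 - p2) - (y1 - p1), p1 - p2⟫ ≤ 0 := by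
      rw [inner_sub_left]
      rw [h1'] at h1
      linarith [h1, h2]
    have h4 : (y2 - p2) - (y1 - p1) = -(y1 - y2) + (p1 - p2) := by abel
    rw [h4, inner_add_left, inner_neg_left, real_inner_self_eq_norm_sq] at h3
    linarith
  nlinarith [hfirm, real_inner_le_norm (y1 - y2) (p1 - p2),
    norm_nonneg (p1 - p2), norm_nonneg (y1 - y2),
    sq_nonneg (‖y1 - y2‖ - ‖p1 - p2‖)]


end Vec

section Mats

open Matrix

variable {n d : ℕ}

def Fip (a b : Mat n d) : ℝ := ∑ i, ⟪a i, b i⟫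

lemma fro2_eq_Fip (a : Mat n d) : fro2 a = Fip a a :=
  Finset.sum_congr rfl fun i _ => (real_inner_self_eq_norm_sq _).symm

lemma fro2_nonneg (a : Mat n d) : 0 ≤ fro2 a :=
  Finset.sum_nonneg fun i _ => by positivity

lemma Fip_comm (a b : Mat n d) : Fip a b = Fip b a :=
  Finset.sum_congr rfl fun i _ => real_inner_comm _ _

lemma fro2_sub (a b : Mat n d) :
    fro2 (a - b) = fro2 a - 2 * Fip a b + fro2 b := by
  simp only [fro2, Fip, Pi.sub_apply, norm_sub_sq_real]
  rw [Finset.sum_add_distrib, Finset.sum_sub_distrib, Finset.mul_sum]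

lemma fro2_add (a b : Mat n d) :
    fro2 (a + b) = fro2 a + 2 * Fip a b + fro2 b := by
  simp only [fro2, Fip, Pi.add_apply, norm_add_sq_real]
  rw [Finset.sum_add_distrib, Finset.sum_add_distrib, Finset.mul_sum]

lemma fro2_smul (c : ℝ) (a : Mat n d) : fro2 (c • a) = c ^ 2 * fro2 a := by
  simp only [fro2, Pi.smul_apply, norm_smul, Real.norm_eq_abs, mul_pow, sq_abs,
    Finset.mul_sum]

lemma Fip_add_right (a b c : Mat n d) : Fip a (b + c) = Fip a b + Fip a c := by
  simp only [Fip, Pi.add_apply, inner_add_right, Finset.sum_add_distrib]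

lemma Fip_smul_right (c : ℝ) (a b : Mat n d) : Fip a (c • b) = c * Fip a b := by
  simp only [Fip, Pi.smul_apply, real_inner_smul_right, Finset.mul_sum]

lemma matMul_sub (S : Matrix (Fin n) (Fin n) ℝ) (a b : Mat n d) :
    matMul S (a - b) = matMul S a - matMul S b := by
  funext i
  simp [matMul, smul_sub, Finset.sum_sub_distrib]

lemma matMul_zero (S : Matrix (Fin n) (Fin n) ℝ) : matMul S (0 : Mat n d) = 0 := by
  funext i
  simp [matMul]

lemma matMul_mul (A B : Matrix (Fin n) (Fin n) ℝ) (y : Mat n d) :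
    matMul (A * B) y = matMul A (matMul B y) := by
  funext i
  simp only [matMul, Matrix.mul_apply, Finset.sum_smul, Finset.smul_sum, smul_smul]
  rw [Finset.sum_comm]

lemma Fip_matMul (S : Matrix (Fin n) (Fin n) ℝ) (hS : S.IsSymm) (a b : Mat n d) :
    Fip (matMul S a) b = Fip a (matMul S b) := by
  simp only [Fip, matMul, sum_inner, inner_sum, real_inner_smul_left,
    real_inner_smul_right]
  rw [Finset.sum_comm]
  refine Finset.sum_congr rfl fun i _ => Finset.sum_congr rfl fun j _ => ?_
  rw [hS.apply i j]

lemma matMul_apply_coord (S : Matrix (Fin n) (Fin n) ℝ) (y : Mat n d) (i : Fin n)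
    (k : Fin d) : matMul S y i k = ∑ j, S i j * y j k := by
  show (∑ j, S i j • y j) k = _
  rw [WithLp.ofLp_sum, Finset.sum_apply]
  rfl

lemma fro2_coord (y : Mat n d) : fro2 y = ∑ i, ∑ k, (y i k) ^ 2 := by
  refine Finset.sum_congr rfl fun i _ => ?_
  rw [← real_inner_self_eq_norm_sq]
  simp only [PiLp.inner_apply, RCLike.inner_apply, conj_trivial, sq]

/-- If `1 - S * S` is PSD then `matMul S` shrinks the Frobenius norm. -/
lemma fro2_matMul_le (S : Matrix (Fin n) (Fin n) ℝ) (hS : S.IsSymm)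
    (hISS : (1 - S * S).PosSemidef) (y : Mat n d) :
    fro2 (matMul S y) ≤ fro2 y := by
  have e1 : fro2 (matMul S y) = ∑ k, ∑ i, (matMul S y i k) ^ 2 := by
    rw [fro2_coord]; exact Finset.sum_comm
  have e2 : fro2 y = ∑ k, ∑ i, (y i k) ^ 2 := by
    rw [fro2_coord]; exact Finset.sum_comm
  rw [e1, e2]
  refine Finset.sum_le_sum fun k _ => ?_
  have h := hISS.dotProduct_mulVec_nonneg (fun j => y j k)
  set v : Fin n → ℝ := fun j => y j k with hv
  have hdot : star v ⬝ᵥ ((1 - S * S) *ᵥ v)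
      = ∑ i, v i ^ 2 - ∑ i, (S *ᵥ v) i ^ 2 := by
    rw [Matrix.sub_mulVec, dotProduct_sub, Matrix.one_mulVec]
    congr 1
    · simp [dotProduct, sq]
    · rw [← Matrix.mulVec_mulVec, Matrix.dotProduct_mulVec]
      have hvm : Matrix.vecMul (star v) S = S *ᵥ v := by
        calc Matrix.vecMul (star v) S = Matrix.vecMul v S := by simp
          _ = Sᵀ *ᵥ v := (Matrix.mulVec_transpose S v).symm
          _ = S *ᵥ v := by rw [hS]
      rw [hvm]
      simp [dotProduct, sq]
  rw [hdot] at h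
  have e3 : ∀ i, matMul S y i k = (S *ᵥ v) i := by
    intro i
    rw [matMul_apply_coord]
    rfl
  calc ∑ i, (matMul S y i k) ^ 2 = ∑ i, ((S *ᵥ v) i) ^ 2 := by
        refine Finset.sum_congr rfl fun i _ => by rw [e3]
    _ ≤ ∑ i, (v i) ^ 2 := by linarith
    _ = ∑ i, (y i k) ^ 2 := rfl


end Mats

end MGSkipAux

open MGSkipAux

/-- **One-step contraction of MG-Skip** (the inequality `E[Ψ^{t+1}] ≤ ζ · Ψ^t`
underlying Theorem 1): for one step of MG-Skip from `(x, u)` with Bernoulli(p)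
coin `θ`, the expected Lyapunov function contracts by the factor
`ζ = max{(1-αμ)², (1-αL)², 1 - p²/5}`. -/
theorem mgSkip_one_step_contraction
    (n d : ℕ) (hn : 1 ≤ n) (hd : 1 ≤ d)
    (μ L α p : ℝ) (hμ : 0 < μ) (hμL : μ ≤ L)
    (hα0 : 0 < α) (hα : α < 2 / L) (hp0 : 0 < p) (hp1 : p ≤ 1)
    (f : Fin n → EuclideanSpace ℝ (Fin d) → ℝ)
    (g : Fin n → EuclideanSpace ℝ (Fin d) → EuclideanSpace ℝ (Fin d))
    (hgrad : ∀ i x, HasGradientAt (f i) (g i x) x)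
    (hstrong : ∀ i, ConvexOn ℝ Set.univ (fun x => f i x - μ / 2 * ‖x‖ ^ 2))
    (hsmooth : ∀ i, LipschitzWith L.toNNReal (g i))
    (r : EuclideanSpace ℝ (Fin d) → ℝ)
    (hrconv : ConvexOn ℝ Set.univ r) (hrcont : Continuous r)
    (prox : EuclideanSpace ℝ (Fin d) → EuclideanSpace ℝ (Fin d))
    (hprox : ∀ y w, α * r (prox y) + 1 / 2 * ‖prox y - y‖ ^ 2
        ≤ α * r w + 1 / 2 * ‖w - y‖ ^ 2)
    (S : Matrix (Fin n) (Fin n) ℝ)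
    (hSsymm : S.IsSymm) (hSpsd : S.PosSemidef)
    (hISS : (1 - S * S).PosSemidef)
    (xstar zstar ustar : Mat n d)
    (hzstar : ∀ i, zstar i = xstar i - α • g i (xstar i) - α • matMul S ustar i)
    (hSz : matMul S zstar = 0)
    (hxstar : ∀ i, xstar i = prox (zstar i))
    (x u : Mat n d)
    (hu5 : (1 / 5) * fro2 (u - ustar) ≤ fro2 (matMul S (u - ustar)))
    (z : Mat n d)
    (hz : ∀ i, z i = x i - α • g i (x i) - α • matMul S u i)
    (uplus : Bool → Mat n d)
    (huplus : ∀ θ, uplus θ = u + (if θ then (1 : ℝ) else 0) • ((p / α) • matMul S z))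
    (xplus : Bool → Mat n d)
    (hxplus : ∀ θ i, xplus θ i =
        prox ((z - (if θ then (1 : ℝ) else 0) • matMul (S * S) z) i)) :
    p * (fro2 (xplus true - xstar) + α ^ 2 / p ^ 2 * fro2 (uplus true - ustar))
      + (1 - p) *
        (fro2 (xplus false - xstar) + α ^ 2 / p ^ 2 * fro2 (uplus false - ustar))
    ≤ (max (max ((1 - α * μ) ^ 2) ((1 - α * L) ^ 2)) (1 - p ^ 2 / 5)) *
        (fro2 (x - xstar) + α ^ 2 / p ^ 2 * fro2 (u - ustar)) := by
  have hL0 : 0 < L := lt_of_lt_of_le hμ hμL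
  have hαL2 : α * L < 2 := (lt_div_iff₀ hL0).mp hα
  set ζ := max (max ((1 - α * μ) ^ 2) ((1 - α * L) ^ 2)) (1 - p ^ 2 / 5) with hζdef
  set hatu := u - ustar with hhatu
  set w : Mat n d := fun i => (x i - α • g i (x i)) - (xstar i - α • g i (xstar i))
    with hwdef
  set s := matMul S hatu with hsdef
  set v := z - zstar with hvdef
  set bb := matMul S v with hbbdef
  set aa := matMul (S * S) v with haadef
  -- basic identities
  have hvrow : ∀ i, v i = w i - α • s i := by
    intro i
    have hs : s i = matMul S u i - matMul S ustar i := by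
      rw [hsdef, hhatu, matMul_sub]
      rfl
    show z i - zstar i = w i - α • s i
    rw [hz i, hzstar i, hs, hwdef]
    module
  have hvmat : v = w + (-α) • s := by
    funext i
    rw [Pi.add_apply, Pi.smul_apply, hvrow i]
    module
  have hV : fro2 v = fro2 w + 2 * (-α) * MGSkipAux.Fip s w + (-α) ^ 2 * fro2 s := by
    rw [hvmat, MGSkipAux.fro2_add, MGSkipAux.fro2_smul, MGSkipAux.Fip_smul_right,
      MGSkipAux.Fip_comm]
    ring
  have haabb : aa = matMul S bb := by
    rw [haadef, hbbdef, matMul_mul]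
  have hva : MGSkipAux.Fip v aa = fro2 bb := by
    calc MGSkipAux.Fip v aa = MGSkipAux.Fip v (matMul S bb) := by rw [haabb]
      _ = MGSkipAux.Fip (matMul S v) bb := (MGSkipAux.Fip_matMul S hSsymm v bb).symm
      _ = fro2 bb := (MGSkipAux.fro2_eq_Fip bb).symm
  have hub : MGSkipAux.Fip hatu bb = MGSkipAux.Fip s w + (-α) * fro2 s := by
    have h1 : MGSkipAux.Fip hatu bb = MGSkipAux.Fip s v := by
      rw [hbbdef, ← MGSkipAux.Fip_matMul S hSsymm hatu v, hsdef]
    have h2 : MGSkipAux.Fip s v = MGSkipAux.Fip s w + (-α) * fro2 s := by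
      rw [hvmat, MGSkipAux.Fip_add_right, MGSkipAux.Fip_smul_right,
        MGSkipAux.fro2_eq_Fip]
    rw [h1, h2]
  have haale : fro2 aa ≤ fro2 bb := by
    rw [haabb]
    exact MGSkipAux.fro2_matMul_le S hSsymm hISS bb
  have hu5' : 1 / 5 * fro2 hatu ≤ fro2 s := hu5
  -- contraction of the gradient-step part
  have hfw : fro2 w ≤ max ((1 - α * μ) ^ 2) ((1 - α * L) ^ 2) * fro2 (x - xstar) := by
    calc fro2 w ≤ ∑ i, max ((1 - α * μ) ^ 2) ((1 - α * L) ^ 2) * ‖x i - xstar i‖ ^ 2 :=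
          Finset.sum_le_sum fun i _ =>
            MGSkipAux.grad_contract μ L α hμ hμL hα0 hαL2 (f i) (g i) (hgrad i)
              (hstrong i) (hsmooth i) (x i) (xstar i)
      _ = max ((1 - α * μ) ^ 2) ((1 - α * L) ^ 2) * fro2 (x - xstar) := by
          rw [fro2, Finset.mul_sum]
          rfl
  have hWζ : fro2 w ≤ ζ * fro2 (x - xstar) :=
    le_trans hfw (mul_le_mul_of_nonneg_right (le_max_left _ _)
      (MGSkipAux.fro2_nonneg _))
  have hζp : 1 - p ^ 2 / 5 ≤ ζ := le_max_right _ _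
  -- the updates
  have hSzstar2 : matMul (S * S) zstar = 0 := by
    rw [matMul_mul, hSz, matMul_zero]
  have hSzb : matMul S z = bb := by
    rw [hbbdef, hvdef, matMul_sub, hSz, sub_zero]
  have haa2 : aa = matMul (S * S) z := by
    rw [haadef, hvdef, matMul_sub, hSzstar2, sub_zero]
  have hu1 : uplus true - ustar = hatu + (p / α) • bb := by
    rw [huplus true, hSzb]
    simp only [if_true, one_smul]
    rw [hhatu]
    abel
  have hu0 : uplus false - ustar = hatu := by
    rw [huplus false]
    simp only [Bool.false_eq_true, if_false, zero_smul, add_zero]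
    rfl
  have hxm1 : z - matMul (S * S) z - zstar = v - aa := by
    rw [haa2, hvdef]
    abel
  have hx1 : fro2 (xplus true - xstar) ≤ fro2 (v - aa) := by
    refine Finset.sum_le_sum fun i _ => ?_
    have e1 : (xplus true - xstar) i = prox ((z - matMul (S * S) z) i) - prox (zstar i) := by
      rw [Pi.sub_apply, hxplus true i, hxstar i]
      simp only [if_true, one_smul]
    have e2 : (v - aa) i = (z - matMul (S * S) z) i - zstar i := by
      rw [← hxm1]
      rfl
    rw [e1, e2]
    exact MGSkipAux.prox_nonexp α hα0 r hrconv prox hprox _ _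
  have hx0 : fro2 (xplus false - xstar) ≤ fro2 v := by
    refine Finset.sum_le_sum fun i _ => ?_
    have e1 : (xplus false - xstar) i = prox (z i) - prox (zstar i) := by
      rw [Pi.sub_apply, hxplus false i, hxstar i]
      simp only [Bool.false_eq_true, if_false, zero_smul, sub_zero]
    have e2 : v i = z i - zstar i := rfl
    rw [e1, e2]
    exact MGSkipAux.prox_nonexp α hα0 r hrconv prox hprox _ _
  -- scalar expansions
  have hF1 : fro2 (v - aa) = fro2 v - 2 * fro2 bb + fro2 aa := by
    rw [MGSkipAux.fro2_sub, hva]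
  have hF2 : fro2 (hatu + (p / α) • bb)
      = fro2 hatu + 2 * (p / α) * (MGSkipAux.Fip s w + (-α) * fro2 s)
        + (p / α) ^ 2 * fro2 bb := by
    rw [MGSkipAux.fro2_add, MGSkipAux.Fip_smul_right, MGSkipAux.fro2_smul, hub]
    ring
  -- assemble
  rw [hu1, hu0]
  calc p * (fro2 (xplus true - xstar) + α ^ 2 / p ^ 2 * fro2 (hatu + (p / α) • bb))
        + (1 - p) * (fro2 (xplus false - xstar) + α ^ 2 / p ^ 2 * fro2 hatu)
      ≤ p * (fro2 (v - aa) + α ^ 2 / p ^ 2 * fro2 (hatu + (p / α) • bb))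
        + (1 - p) * (fro2 v + α ^ 2 / p ^ 2 * fro2 hatu) := by
        refine add_le_add
          (mul_le_mul_of_nonneg_left (add_le_add hx1 le_rfl) hp0.le)
          (mul_le_mul_of_nonneg_left (add_le_add hx0 le_rfl) (by linarith))
    _ ≤ ζ * (fro2 (x - xstar) + α ^ 2 / p ^ 2 * fro2 hatu) := by
        rw [hF1, hF2, hV]
        have hαne : α ≠ 0 := ne_of_gt hα0
        have hpne : p ≠ 0 := ne_of_gt hp0
        have e1 : p * ((fro2 w + 2 * (-α) * MGSkipAux.Fip s w + (-α) ^ 2 * fro2 s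
              - 2 * fro2 bb + fro2 aa)
              + α ^ 2 / p ^ 2 * (fro2 hatu
                + 2 * (p / α) * (MGSkipAux.Fip s w + (-α) * fro2 s)
                + (p / α) ^ 2 * fro2 bb))
            + (1 - p) * ((fro2 w + 2 * (-α) * MGSkipAux.Fip s w + (-α) ^ 2 * fro2 s)
              + α ^ 2 / p ^ 2 * fro2 hatu)
            = fro2 w + α ^ 2 / p ^ 2 * fro2 hatu - α ^ 2 * fro2 s
              + p * (fro2 aa - fro2 bb) := by
          field_simp
          ring
        rw [e1]
        have h2 : p * (fro2 aa - fro2 bb) ≤ 0 := by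
          have := mul_le_mul_of_nonneg_left (sub_nonpos.2 haale) hp0.le
          simpa using this
        have h3 : α ^ 2 * (1 / 5 * fro2 hatu) ≤ α ^ 2 * fro2 s :=
          mul_le_mul_of_nonneg_left hu5' (by positivity)
        have h4 : α ^ 2 / p ^ 2 * ((1 - p ^ 2 / 5) * fro2 hatu)
            ≤ α ^ 2 / p ^ 2 * (ζ * fro2 hatu) :=
          mul_le_mul_of_nonneg_left
            (mul_le_mul_of_nonneg_right hζp (MGSkipAux.fro2_nonneg _)) (by positivity)
        have h5 : α ^ 2 / p ^ 2 * fro2 hatu - α ^ 2 * (1 / 5 * fro2 hatu)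
            = α ^ 2 / p ^ 2 * ((1 - p ^ 2 / 5) * fro2 hatu) := by
          field_simp
        have h6 : α ^ 2 / p ^ 2 * (ζ * fro2 hatu) = ζ * (α ^ 2 / p ^ 2 * fro2 hatu) := by
          ring
        have h7 : ζ * (fro2 (x - xstar) + α ^ 2 / p ^ 2 * fro2 hatu)
            = ζ * fro2 (x - xstar) + ζ * (α ^ 2 / p ^ 2 * fro2 hatu) := by ring
        rw [h7]
        linarith
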